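/- arXiv:1806.08590 — 3 statements merged into one kernel-verified Lean document; each statement's English description precedes it below -/
import Mathlib

section
/- Let Γ ≤ Δ be countable discrete groups, T ⊆ Δ a transversal for the left cosets Δ/Γ, and a ∈ A(Γ,X,μ) a measure-preserving action. Then the co-induced action CIND_Γ^Δ(a) is not essentially free if and only if there exists γ ∈ core_Δ(Γ) \ {e} such that ∑_{t∈T} (1 − μ(Fix_a(t⁻¹γt))) < ∞ and μ(Fix_a(t⁻¹γt)) > 0 for all t ∈ T. -/
open MeasureTheory

namespace IRSPaper


/-! ## Basic setup: the space of subgroups, invariant random subgroups -/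

/-- The conjugation action of a group on its space of subgroups: `g • H = gHg⁻¹`. -/
def conjSub {G : Type*} [Group G] (g : G) (H : Subgroup G) : Subgroup G :=
  Subgroup.map ((MulAut.conj g).toMonoidHom) H

/-- The topology on the space of subgroups of `G`, induced from the product topology
on `G → Bool` (i.e. the topology of `2^G`). -/
noncomputable instance instTopSub (G : Type*) [Group G] : TopologicalSpace (Subgroup G) :=
  TopologicalSpace.induced
    (fun (H : Subgroup G) (g : G) => @decide (g ∈ H) (Classical.dec _)) inferInstance

/-- The Borel σ-algebra on the space of subgroups. -/
noncomputable instance instMeasSub (G : Type*) [Group G] : MeasurableSpace (Subgroup G) :=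
  borel _

instance instBorelSub (G : Type*) [Group G] : BorelSpace (Subgroup G) := ⟨rfl⟩

/-- An invariant random subgroup: a Borel probability measure on `Sub(G)` which is invariant
under the conjugation action of `G`. -/
def IsIRS {G : Type*} [Group G] (θ : Measure (Subgroup G)) : Prop :=
  IsProbabilityMeasure θ ∧ ∀ g : G, Measure.map (conjSub g) θ = θ

/-- The basic set `N_F = {H ∈ Sub(G) : F ⊆ H}`. -/
def NSet {G : Type*} [Group G] (F : Set G) : Set (Subgroup G) :=
  {H : Subgroup G | F ⊆ (H : Set G)}

/-- For `Γ ≤ Δ` and `S ⊆ Δ`, the set of subgroups of `Γ` containing every element of `Γ`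
whose image in `Δ` lies in `S`.  When `S = t⁻¹Ft ⊆ Γ`, this is exactly the basic set
`N_{t⁻¹Ft}^Γ ⊆ Sub(Γ)`. -/
def NpullSet {Δ : Type*} [Group Δ] (Γ : Subgroup Δ) (S : Set Δ) : Set (Subgroup ↥Γ) :=
  {Λ : Subgroup ↥Γ | ∀ x : ↥Γ, (x : Δ) ∈ S → x ∈ Λ}

/-- `T` is a transversal for the left cosets `Δ/Γ`: each left coset `dΓ` contains exactly
one element of `T`. -/
def IsLeftTransversal {Δ : Type*} [Group Δ] (Γ : Subgroup Δ) (T : Set Δ) : Prop :=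
  ∀ d : Δ, ∃! t : Δ, t ∈ T ∧ d⁻¹ * t ∈ Γ

/-- The defining property of the co-induced invariant random subgroup
`ν = CIND_Γ^Δ(θ)` (with respect to the transversal `T`):  for every finite `F ⊆ Δ`,
`ν(N_F) = 0` if `F ⊄ core_Δ(Γ)` and `ν(N_F) = ∏_{t ∈ T} θ(N_{t⁻¹Ft}^Γ)` if `F ⊆ core_Δ(Γ)`. -/
def CindSpec {Δ : Type*} [Group Δ] (Γ : Subgroup Δ) (T : Set Δ)
    (θ : Measure (Subgroup ↥Γ)) (ν : Measure (Subgroup Δ)) : Prop :=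
  ∀ F : Finset Δ,
    (¬ (F : Set Δ) ⊆ (Γ.normalCore : Set Δ) → ν (NSet (F : Set Δ)) = 0) ∧
    ((F : Set Δ) ⊆ (Γ.normalCore : Set Δ) →
      ν (NSet (F : Set Δ)) =
        ∏' t : T, θ (NpullSet Γ ((fun d => (t : Δ)⁻¹ * d * (t : Δ)) '' (F : Set Δ))))

/-- Ergodicity of a (not necessarily probability-) measure-preserving action given by
an explicit family of maps: every invariant measurable set is null or conull. -/
def ErgodicAct {G α : Type*} [MeasurableSpace α] (act : G → α → α) (μ : Measure α) : Prop :=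
  ∀ s : Set α, MeasurableSet s → (∀ g : G, act g ⁻¹' s = s) → μ s = 0 ∨ μ sᶜ = 0

/-- Weak mixing of an action: the diagonal action on the square is ergodic. -/
def WeaklyMixingAct {G α : Type*} [MeasurableSpace α] (act : G → α → α) (μ : Measure α) : Prop :=
  ErgodicAct (fun (g : G) (p : α × α) => (act g p.1, act g p.2)) (μ.prod μ)

/-- A measure is non-atomic (has no atoms) if every singleton is null. -/
def NonAtomicMeasure {α : Type*} [MeasurableSpace α] (μ : Measure α) : Prop :=
  ∀ x : α, μ {x} = 0

/-- The kernel of an IRS `θ` of `Γ`: the set of `γ ∈ Γ` with `θ(N_γ) = 1`.  (For a probability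
measure this set is a subgroup; taking `Subgroup.closure` makes it a `Subgroup` on the nose.) -/
def kerIRS {Δ : Type*} [Group Δ] (Γ : Subgroup Δ) (θ : Measure (Subgroup ↥Γ)) : Subgroup ↥Γ :=
  Subgroup.closure {x : ↥Γ | θ {Λ : Subgroup ↥Γ | x ∈ Λ} = 1}

/-- `core_Δ(ker(θ))`, viewed as a subgroup of `Δ`. -/
def coreKer {Δ : Type*} [Group Δ] (Γ : Subgroup Δ) (θ : Measure (Subgroup ↥Γ)) : Subgroup Δ :=
  ((kerIRS Γ θ).map Γ.subtype).normalCore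

/-! ## Measure-preserving actions, stabilizer type, product measures -/

/-- `a` is a measure-preserving (Borel) action of `G` on `(X,μ)`. -/
def IsMPAction {G X : Type*} [Group G] [MeasurableSpace X] (a : G → X → X)
    (μ : Measure X) : Prop :=
  (∀ g : G, Measurable (a g)) ∧ (∀ g : G, Measure.map (a g) μ = μ) ∧
    a 1 = id ∧ ∀ g h : G, a (g * h) = a g ∘ a h

/-- The stabilizer of a point, as a subgroup (for an action, `{g | a g x = x}` is a
subgroup, so taking `Subgroup.closure` of it does not change it). -/
def stabSub {G X : Type*} [Group G] (a : G → X → X) (x : X) : Subgroup G :=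
  Subgroup.closure {g : G | a g x = x}

/-- The type of an action: the distribution of the stabilizer of a `μ`-random point. -/
noncomputable def typeM {G X : Type*} [Group G] [MeasurableSpace X]
    (a : G → X → X) (μ : Measure X) : Measure (Subgroup G) :=
  Measure.map (fun x => stabSub a x) μ

/-- `ν` is the product measure `μ^ι` on `ι → X`: a probability measure whose finite-dimensional
cylinder sets have the product measure (this characterizes `μ^ι` uniquely). -/
def IsProdMeasure {ι X : Type*} [MeasurableSpace X] (μ : Measure X)
    (ν : Measure (ι → X)) : Prop :=
  IsProbabilityMeasure ν ∧
    ∀ (s : Finset ι) (f : ι → Set X), (∀ i, MeasurableSet (f i)) →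
      ν {x : ι → X | ∀ i ∈ s, x i ∈ f i} = ∏ i ∈ s, μ (f i)

/-!
For `γ` in the normal core every `t⁻¹γt` lies in `Γ`, so `σ(γ⁻¹, ·)` is the identity on `T` and
the fixed set of `γ` in `X^T` is the box `∏_t Fix_a(t⁻¹γt)`. Its `μ^T`-measure is the infimum of
the finite products of the `p_t = μ(Fix_a(t⁻¹γt))`, which is positive exactly when every `p_t` is
positive and `∑ (1 - p_t) < ∞`: on finite sets, `∏ p · (1 + ∑ (1 - p)) ≤ 1` and
`1 ≤ ∏ p + ∑ (1 - p)`. For `δ` outside the core, `σ(δ⁻¹, ·)` moves some `t`, so a `δ`-fixed `f`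
satisfies `f t = φ (f t')` with `t' ≠ t`; the pair `(f t, f t')` is `μ ⊗ μ`-distributed and the
graph of `φ` is null for it because `μ` has no atoms.
-/

open ENNReal

section FiniteProducts

variable {ι : Type*} {p : ι → ℝ≥0∞}

theorem prod_mul_one_add_sum_one_sub_le_one (hp : ∀ i, p i ≤ 1) (s : Finset ι) :
    (∏ i ∈ s, p i) * (1 + ∑ i ∈ s, (1 - p i)) ≤ 1 := by
  classical
  induction s using Finset.induction_on with
  | empty => simp
  | @insert j s hj ih =>
    have hP : ∏ i ∈ s, p i ≤ 1 := Finset.prod_le_one' fun i _ => hp i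
    rw [Finset.prod_insert hj, Finset.sum_insert hj]
    calc p j * (∏ i ∈ s, p i) * (1 + (1 - p j + ∑ i ∈ s, (1 - p i)))
        = p j * ((∏ i ∈ s, p i) * (1 + ∑ i ∈ s, (1 - p i)))
            + p j * (∏ i ∈ s, p i) * (1 - p j) := by ring
      _ ≤ p j * 1 + 1 * 1 * (1 - p j) := by gcongr; exact hp j
      _ = 1 := by rw [mul_one, one_mul, one_mul, add_tsub_cancel_of_le (hp j)]

theorem one_le_prod_add_sum_one_sub (hp : ∀ i, p i ≤ 1) (s : Finset ι) :
    1 ≤ ∏ i ∈ s, p i + ∑ i ∈ s, (1 - p i) := by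
  classical
  induction s using Finset.induction_on with
  | empty => simp
  | @insert j s hj ih =>
    rw [Finset.prod_insert hj, Finset.sum_insert hj]
    calc 1 = p j * 1 + (1 - p j) := by rw [mul_one, add_tsub_cancel_of_le (hp j)]
      _ ≤ p j * (∏ i ∈ s, p i + ∑ i ∈ s, (1 - p i)) + (1 - p j) := by gcongr
      _ ≤ p j * ∏ i ∈ s, p i + (1 - p j + ∑ i ∈ s, (1 - p i)) := by
          rw [mul_add, add_comm (1 - p j), ← add_assoc]
          gcongr
          exact mul_le_of_le_one_left' (hp j)

theorem sum_le_tsum_compl {q : ι → ℝ≥0∞} {s t : Finset ι} (hst : Disjoint s t) :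
    ∑ i ∈ s, q i ≤ ∑' i : {i // i ∉ t}, q i := by
  rw [← Finset.tsum_subtype]
  exact ENNReal.tsum_comp_le_tsum_of_injective
    (f := fun i : s => (⟨i, Finset.disjoint_left.1 hst i.2⟩ : {i // i ∉ t}))
    (fun i j h => Subtype.ext (congrArg Subtype.val h :)) _

theorem iInf_prod_ne_zero_iff (hp : ∀ i, p i ≤ 1) :
    (⨅ s : Finset ι, ∏ i ∈ s, p i) ≠ 0 ↔ ∑' i, (1 - p i) < ∞ ∧ ∀ i, 0 < p i := by
  classical
  set P := ⨅ s : Finset ι, ∏ i ∈ s, p i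
  constructor
  · intro hP
    refine ⟨?_, fun i => ?_⟩
    · calc ∑' i, (1 - p i) ≤ P⁻¹ := by
            rw [ENNReal.tsum_eq_iSup_sum]
            refine iSup_le fun s => ENNReal.le_inv_iff_mul_le.2 ?_
            calc (∑ i ∈ s, (1 - p i)) * P
                ≤ (1 + ∑ i ∈ s, (1 - p i)) * ∏ i ∈ s, p i := by
                  gcongr
                  · exact le_add_self
                  · exact iInf_le _ s
              _ ≤ 1 := by rw [mul_comm]; exact prod_mul_one_add_sum_one_sub_le_one hp s
        _ < ∞ := ENNReal.inv_lt_top.2 (pos_iff_ne_zero.2 hP)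
    · calc 0 < P := pos_iff_ne_zero.2 hP
        _ ≤ ∏ j ∈ {i}, p j := iInf_le _ _
        _ = p i := Finset.prod_singleton _ _
  · rintro ⟨hsum, hpos⟩ hP
    -- a finite set outside of which the defect `∑ (1 - p i)` is less than `1`
    obtain ⟨t, ht⟩ := ((tendsto_tsum_compl_atTop_zero hsum.ne).eventually
      (gt_mem_nhds zero_lt_one)).exists_forall_of_atTop
    set τ := ∑' i : {i // i ∉ t}, (1 - p i)
    set c := ∏ i ∈ t, p i
    have hc0 : c ≠ 0 := Finset.prod_ne_zero_iff.2 fun i _ => (hpos i).ne'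
    have hctop : c ≠ ∞ := prod_ne_top fun i _ => ne_top_of_le_ne_top one_ne_top (hp i)
    have hcP : c ≤ P + c * τ := by
      rw [ENNReal.iInf_add]
      refine le_iInf fun s => ?_
      have hdisj : Disjoint (s \ t) t := Finset.sdiff_disjoint
      calc c = c * 1 := (mul_one c).symm
        _ ≤ c * (∏ i ∈ s \ t, p i + ∑ i ∈ s \ t, (1 - p i)) := by
            gcongr; exact one_le_prod_add_sum_one_sub hp _
        _ ≤ ∏ i ∈ t ∪ s, p i + c * τ := by
            rw [mul_add, ← Finset.union_sdiff_self_eq_union, Finset.prod_union hdisj.symm]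
            gcongr
            exact sum_le_tsum_compl hdisj
        _ ≤ ∏ i ∈ s, p i + c * τ := add_le_add_left (Finset.prod_le_prod_of_subset_of_le_one'
              Finset.subset_union_right fun i _ _ => hp i) _
    rw [hP, zero_add] at hcP
    have : 1 ≤ τ := by
      rwa [← ENNReal.mul_le_mul_iff_right hc0 hctop, mul_one]
    exact (ht t le_rfl).not_ge this

end FiniteProducts

namespace IsProdMeasure

variable {ι X : Type*} [MeasurableSpace X] {μ : Measure X} {ν : Measure (ι → X)}

theorem measure_pi_univ [Countable ι] (hν : IsProdMeasure μ ν) {E : ι → Set X}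
    (hE : ∀ i, MeasurableSet (E i)) :
    ν (Set.univ.pi E) = ⨅ s : Finset ι, ∏ i ∈ s, μ (E i) := by
  have := hν.1
  have hcyl : Set.univ.pi E = ⋂ s : Finset ι, (s : Set ι).pi E := by
    ext f
    simp only [Set.mem_iInter, Set.mem_pi, Finset.mem_coe]
    exact ⟨fun hf s i _ => hf i trivial, fun hf i _ => hf {i} i (Finset.mem_singleton_self i)⟩
  rw [hcyl, Directed.measure_iInter]
  · exact iInf_congr fun s => hν.2 s E hE
  · exact fun s => (MeasurableSet.pi s.countable_toSet fun i _ => hE i).nullMeasurableSet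
  · classical
    exact fun s t => ⟨s ∪ t, fun f hf i hi => hf i (by simp [hi]),
      fun f hf i hi => hf i (by simp [hi])⟩
  · exact ⟨∅, measure_ne_top ν _⟩

theorem map_eval_prod_eval [SigmaFinite μ] (hν : IsProdMeasure μ ν) {i j : ι} (hij : i ≠ j) :
    ν.map (fun f => (f i, f j)) = μ.prod μ := by
  classical
  refine (Measure.prod_eq fun s t hs ht => ?_).symm
  rw [Measure.map_apply ((measurable_pi_apply i).prodMk (measurable_pi_apply j)) (hs.prod ht)]
  convert hν.2 {i, j} (fun k => if k = i then s else t) (fun k => by split_ifs <;> assumption)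
    using 2
  · ext f
    simp [hij.symm]
  · simp [Finset.prod_pair hij, hij.symm]

theorem measure_setOf_eval_eq_comp_eval [MeasurableEq X] [SigmaFinite μ] [NullSingletonClass μ]
    (hν : IsProdMeasure μ ν) {i j : ι} (hij : i ≠ j) {φ : X → X} (hφ : Measurable φ) :
    ν {f | f i = φ (f j)} = 0 := by
  have hpair : Measurable fun f : ι → X => (f i, f j) := by fun_prop
  have hgraph : MeasurableSet {p : X × X | p.1 = φ p.2} :=
    measurableSet_eq_fun measurable_fst (hφ.comp measurable_snd)
  calc ν {f | f i = φ (f j)} = ν.map (fun f => (f i, f j)) {p | p.1 = φ p.2} :=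
        (Measure.map_apply hpair hgraph).symm
    _ = ∫⁻ y, μ {φ y} ∂μ := by
        rw [hν.map_eval_prod_eval hij, Measure.prod_apply_symm hgraph]; rfl
    _ = 0 := by simp

end IsProdMeasure

section Transversal

variable {Δ : Type*} [Group Δ] {Γ : Subgroup Δ} {T : Set Δ}

theorem IsLeftTransversal.mem_normalCore_iff (hT : IsLeftTransversal Γ T) {δ : Δ} :
    δ ∈ Γ.normalCore ↔ ∀ t ∈ T, t⁻¹ * δ * t ∈ Γ := by
  refine ⟨fun hδ t _ => by simpa using hδ t⁻¹, fun h b => ?_⟩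
  obtain ⟨t, ⟨ht, hbt⟩, -⟩ := hT b⁻¹
  rw [inv_inv] at hbt
  have hconj : b * δ * b⁻¹ = (b * t) * (t⁻¹ * δ * t) * (b * t)⁻¹ := by group
  rw [hconj]
  exact mul_mem (mul_mem hbt (h t ht)) (inv_mem hbt)

def IsTransversalFactorization (σ : Δ → T → T) (ρ : Δ → T → Γ) : Prop :=
  ∀ (δ : Δ) (t : T), δ * (t : Δ) = (σ δ t : Δ) * ((ρ δ t : Γ) : Δ)

variable {σ : Δ → T → T} {ρ : Δ → T → Γ}

theorem IsTransversalFactorization.coe_rho_eq_of_sigma_eq (hσρ : IsTransversalFactorization σ ρ)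
    {δ : Δ} {t : T} (h : σ δ t = t) : (ρ δ t : Δ) = (t : Δ)⁻¹ * δ * t := by
  rw [mul_assoc, hσρ, h, inv_mul_cancel_left]

theorem IsTransversalFactorization.sigma_eq_self_iff (hσρ : IsTransversalFactorization σ ρ)
    (hT : IsLeftTransversal Γ T) {δ : Δ} {t : T} :
    σ δ t = t ↔ (t : Δ)⁻¹ * δ * t ∈ Γ := by
  refine ⟨fun h => hσρ.coe_rho_eq_of_sigma_eq h ▸ (ρ δ t).2, fun h => Subtype.ext ?_⟩
  obtain ⟨u, -, hu⟩ := hT (δ * t)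
  have hσ : ((δ * t)⁻¹ * σ δ t : Δ) = ((ρ δ t)⁻¹ : Γ) := by
    rw [hσρ δ t, mul_inv_rev, inv_mul_cancel_right, Subgroup.coe_inv]
  have ht : ((δ * t)⁻¹ * t : Δ) = ((t : Δ)⁻¹ * δ * t)⁻¹ := by group
  rw [hu _ ⟨(σ δ t).2, hσ ▸ SetLike.coe_mem _⟩, hu _ ⟨t.2, ht ▸ inv_mem h⟩]

end Transversal

section Coinduction

variable {Δ : Type*} [Group Δ] {Γ : Subgroup Δ} {T : Set Δ} {X : Type*}

/-- `Fix_a(d)` when `d ∈ Γ`; when `d ∉ Γ` the condition is vacuous and this is all of `X`. -/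
def fixSet (a : Γ → X → X) (d : Δ) : Set X :=
  {x | ∀ g : Γ, (g : Δ) = d → a g x = x}

theorem fixSet_coe (a : Γ → X → X) (g : Γ) : fixSet a g = {x | a g x = x} := by
  ext x
  exact ⟨fun h => h g rfl, fun h g' hg' => Subtype.ext hg' ▸ h⟩

theorem measurableSet_fixSet [MeasurableSpace X] [MeasurableEq X] {a : Γ → X → X}
    (ha : ∀ g, Measurable (a g)) {d : Δ} (hd : d ∈ Γ) : MeasurableSet (fixSet a d) := by
  rw [show d = ((⟨d, hd⟩ : Γ) : Δ) from rfl, fixSet_coe]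
  exact measurableSet_eq_fun (ha _) measurable_id

def coindAction (σ : Δ → T → T) (ρ : Δ → T → Γ) (a : Γ → X → X) (δ : Δ) (f : T → X) :
    T → X :=
  fun t => a (ρ δ⁻¹ t)⁻¹ (f (σ δ⁻¹ t))

variable {σ : Δ → T → T} {ρ : Δ → T → Γ}

theorem setOf_coindAction_eq_self_of_mem_normalCore (hσρ : IsTransversalFactorization σ ρ)
    (hT : IsLeftTransversal Γ T) (a : Γ → X → X) {δ : Δ} (hδ : δ ∈ Γ.normalCore) :
    {f | coindAction σ ρ a δ f = f} =
      Set.univ.pi fun t : T => fixSet a ((t : Δ)⁻¹ * δ * t) := by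
  have hσ (t : T) : σ δ⁻¹ t = t :=
    (hσρ.sigma_eq_self_iff hT).2 (hT.mem_normalCore_iff.1 (inv_mem hδ) t t.2)
  have hρ (t : T) : (((ρ δ⁻¹ t)⁻¹ : Γ) : Δ) = (t : Δ)⁻¹ * δ * t := by
    rw [Subgroup.coe_inv, hσρ.coe_rho_eq_of_sigma_eq (hσ t)]
    group
  ext f
  simp only [Set.mem_ofPred_eq, funext_iff, coindAction, Set.mem_univ_pi, hσ, ← hρ, fixSet_coe]

theorem measure_setOf_coindAction_eq_self_of_notMem_normalCore
    [MeasurableSpace X] [MeasurableEq X] {μ : Measure X} [SigmaFinite μ] [NullSingletonClass μ]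
    {ν : Measure (T → X)} (hσρ : IsTransversalFactorization σ ρ)
    (hT : IsLeftTransversal Γ T) (hν : IsProdMeasure μ ν) {a : Γ → X → X}
    (ha : ∀ g, Measurable (a g)) {δ : Δ} (hδ : δ ∉ Γ.normalCore) :
    ν {f | coindAction σ ρ a δ f = f} = 0 := by
  obtain ⟨t, ht⟩ : ∃ t : T, σ δ⁻¹ t ≠ t := by
    by_contra! h
    refine hδ (inv_inv δ ▸ inv_mem (hT.mem_normalCore_iff.2 fun t ht => ?_))
    exact (hσρ.sigma_eq_self_iff hT).1 (h ⟨t, ht⟩)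
  -- a fixed point of `δ` is determined at `t` by its value at `σ(δ⁻¹, t) ≠ t`
  refine measure_mono_null (fun f hf => ?_)
    (hν.measure_setOf_eval_eq_comp_eval ht.symm (ha (ρ δ⁻¹ t)⁻¹))
  exact (congrFun hf t).symm

end Coinduction

/-- Characterization of non-freeness of the co-induced action: `CIND_Γ^Δ(a)` is not
(essentially) free iff there is `γ ∈ core_Δ(Γ) \ {e}` with
`∑_{t∈T} (1 - μ(Fix_a(t⁻¹γt))) < ∞` and `μ(Fix_a(t⁻¹γt)) > 0` for all `t ∈ T`.
Here the set `{x | ∀ g : Γ, ↑g = t⁻¹γt → a g x = x}` is exactly `Fix_a(t⁻¹γt)` when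
`γ ∈ core_Δ(Γ)` (so that `t⁻¹γt ∈ Γ`). -/
theorem coinduced_action_not_free_iff {Δ : Type*} [Group Δ] [Countable Δ] (Γ : Subgroup Δ)
    {X : Type*} [MeasurableSpace X] [StandardBorelSpace X]
    (μ : Measure X) [IsProbabilityMeasure μ] [NullSingletonClass μ]
    (T : Set Δ) (hT : IsLeftTransversal Γ T)
    (σ : Δ → T → T) (ρ : Δ → T → ↥Γ)
    (hσρ : ∀ (δ : Δ) (t : T), δ * (t : Δ) = (σ δ t : Δ) * ((ρ δ t : ↥Γ) : Δ))
    (a : ↥Γ → X → X) (ha : IsMPAction a μ)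
    (ν : Measure (T → X)) (hν : IsProdMeasure μ ν) :
    (∃ δ : Δ, δ ≠ 1 ∧
        ν {f : T → X | (fun t : T => a (ρ δ⁻¹ t)⁻¹ (f (σ δ⁻¹ t))) = f} ≠ 0) ↔
      ∃ γ : Δ, γ ∈ Γ.normalCore ∧ γ ≠ 1 ∧
        (∑' t : T,
          (1 - μ {x : X | ∀ g : ↥Γ, (g : Δ) = (t : Δ)⁻¹ * γ * (t : Δ) → a g x = x})) < ⊤ ∧
        ∀ t : T, 0 < μ {x : X | ∀ g : ↥Γ, (g : Δ) = (t : Δ)⁻¹ * γ * (t : Δ) → a g x = x} := by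
  have ha_meas : ∀ g, Measurable (a g) := ha.1
  have hfix (γ : Δ) (hγ : γ ∈ Γ.normalCore) :
      ν {f | coindAction σ ρ a γ f = f} ≠ 0 ↔
        (∑' t : T, (1 - μ (fixSet a ((t : Δ)⁻¹ * γ * t)))) < ⊤ ∧
          ∀ t : T, 0 < μ (fixSet a ((t : Δ)⁻¹ * γ * t)) := by
    rw [setOf_coindAction_eq_self_of_mem_normalCore hσρ hT a hγ,
      hν.measure_pi_univ fun t => measurableSet_fixSet ha_meas (hT.mem_normalCore_iff.1 hγ t t.2)]
    exact iInf_prod_ne_zero_iff fun t => prob_le_one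
  constructor
  · rintro ⟨δ, hδ1, hδν⟩
    by_cases hδ : δ ∈ Γ.normalCore
    · exact ⟨δ, hδ, hδ1, (hfix δ hδ).1 hδν⟩
    · exact absurd
        (measure_setOf_coindAction_eq_self_of_notMem_normalCore hσρ hT hν ha_meas hδ) hδν
  · rintro ⟨γ, hγ, hγ1, h⟩
    exact ⟨γ, hγ1, (hfix γ hγ).2 h⟩

end IRSPaper
end

section
/- Let Γ ≤ Δ be countable discrete groups. The co-induction map CIND_Γ^Δ : IRS(Γ) → IRS(Δ) is continuous (with respect to the weak* topologies) if and only if either [Δ : Γ] < ∞ or core_Δ(Γ) = {e}. -/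
open MeasureTheory

namespace IRSPaper


/-! ## The space `IRS(G)` with the weak* topology -/

/-- The space `IRS(G)` of invariant random subgroups of `G`, as a subspace of the space of
Borel probability measures on `Sub(G)` with the topology of weak convergence. -/
def IRSSpace (G : Type*) [Group G] : Type _ :=
  {θ : ProbabilityMeasure (Subgroup G) //
    ∀ g : G, Measure.map (conjSub g) (θ : Measure (Subgroup G)) = (θ : Measure (Subgroup G))}

noncomputable instance instTopIRSSpace (G : Type*) [Group G] :
    TopologicalSpace (IRSSpace G) :=
  instTopologicalSpaceSubtype

/-!
Measures of clopen sets depend continuously on a probability measure, and the sets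
`N_F = {Λ : F ⊆ Λ}` are clopen in the compact metrizable space `Sub(G)`. Since they form a
π-system generating the Borel σ-algebra, and since the space of probability measures on
`Sub(G)` is compact, weak convergence in `IRS(G)` is the same as convergence of all `θ(N_F)`:
every cluster point of a net agrees with the candidate limit on each `N_F`.

If `[Δ : Γ] < ∞`, then `CIND(θ)(N_F)` is a finite product of numbers `θ(N_{t⁻¹Ft})`, hence
continuous in `θ`. If `core_Δ(Γ) = {e}`, then `CIND(θ) = δ_{e}` for every `θ`. Otherwise take
`e ≠ γ ∈ core_Δ(Γ)` and `θ_p = p δ_Γ + (1 - p) δ_{e}`: for `p < 1` the value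
`CIND(θ_p)(N_{γ}) = ∏_{t ∈ T} p` vanishes because `T` is infinite, whereas it is `1` at `p = 1`,
so `CIND` is discontinuous at `θ_1`.
-/

open Filter Topology TopologicalSpace
open scoped ENNReal NNReal

lemma _root_.ENNReal.tprod_const_of_lt_one {β : Type*} [Infinite β] {a : ℝ≥0∞} (ha : a < 1) :
    ∏' _ : β, a = 0 :=
  HasProd.tprod_eq <| by
    simpa [HasProd, Finset.prod_const, Function.comp_def] using
      (ENNReal.tendsto_pow_atTop_nhds_zero_of_lt_one ha).comp tendsto_card_atTop_atTop

lemma _root_.MeasureTheory.ProbabilityMeasure.continuous_apply_of_isClopen {X : Type*}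
    [TopologicalSpace X] [MeasurableSpace X] [OpensMeasurableSpace X] [HasOuterApproxClosed X]
    {s : Set X} (hs : IsClopen s) : Continuous fun μ : ProbabilityMeasure X => (μ : Measure X) s :=
  continuous_iff_continuousAt.mpr fun _ =>
    ProbabilityMeasure.tendsto_measure_of_null_frontier_of_tendsto' tendsto_id
      (by simp [hs.frontier_eq])

section DiracMix

variable {X : Type*} [MeasurableSpace X]

noncomputable def diracMix (x y : X) (p : unitInterval) : ProbabilityMeasure X :=
  ⟨ENNReal.ofReal p • Measure.dirac x + ENNReal.ofReal (1 - p) • Measure.dirac y, ⟨by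
    simp [← ENNReal.ofReal_add p.2.1 (sub_nonneg.2 p.2.2)]⟩⟩

lemma diracMix_apply_of_mem_of_notMem {x y : X} {s : Set X} (hs : MeasurableSet s) (hx : x ∈ s)
    (hy : y ∉ s) (p : unitInterval) : (diracMix x y p : Measure X) s = ENNReal.ofReal p := by
  simp [diracMix, Measure.dirac_apply' _ hs, hx, hy]

lemma map_diracMix {Y : Type*} [MeasurableSpace Y] {f : X → Y} (hf : Measurable f) (x y : X)
    (p : unitInterval) :
    (diracMix x y p : Measure X).map f = diracMix (f x) (f y) p := by
  simp [diracMix, Measure.map_add _ _ hf, Measure.map_smul, Measure.map_dirac' hf]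

lemma continuous_diracMix [TopologicalSpace X] [OpensMeasurableSpace X] (x y : X) :
    Continuous (diracMix x y) := by
  refine ProbabilityMeasure.continuous_iff_forall_continuous_lintegral.mpr fun f => ?_
  have hf : Measurable fun z => (f z : ℝ≥0∞) := by fun_prop
  simp only [diracMix, ProbabilityMeasure.coe_mk, lintegral_add_measure, lintegral_smul_measure,
    lintegral_dirac' _ hf, smul_eq_mul]
  exact ((ENNReal.continuous_mul_const ENNReal.coe_ne_top).comp
      (ENNReal.continuous_ofReal.comp (by fun_prop))).add
    ((ENNReal.continuous_mul_const ENNReal.coe_ne_top).comp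
      (ENNReal.continuous_ofReal.comp (by fun_prop)))

end DiracMix

section SubgroupSpace

variable {G : Type*} [Group G]

noncomputable def toBoolFun (H : Subgroup G) : G → Bool :=
  fun g => @decide (g ∈ H) (Classical.dec _)

lemma toBoolFun_eq_true {H : Subgroup G} {g : G} : toBoolFun H g = true ↔ g ∈ H := by
  simp [toBoolFun]

lemma isEmbedding_toBoolFun : Topology.IsEmbedding (toBoolFun : Subgroup G → G → Bool) :=
  ⟨⟨rfl⟩, fun H K h => by ext g; rw [← toBoolFun_eq_true, h, toBoolFun_eq_true]⟩

lemma continuous_toBoolFun_apply (g : G) : Continuous fun H : Subgroup G => toBoolFun H g :=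
  (continuous_apply g).comp isEmbedding_toBoolFun.continuous

lemma isClopen_setOf_mem (g : G) : IsClopen {H : Subgroup G | g ∈ H} := by
  simpa only [Set.preimage, Set.mem_singleton_iff, toBoolFun_eq_true] using
    (isClopen_discrete {true}).preimage (continuous_toBoolFun_apply g)

lemma NSet_eq_biInter (A : Set G) : NSet A = ⋂ g ∈ A, {H : Subgroup G | g ∈ H} := by
  ext H; simp [NSet, Set.subset_def]

lemma isClopen_NSet {A : Set G} (hA : A.Finite) : IsClopen (NSet A) := by
  rw [NSet_eq_biInter]
  exact hA.isClopen_biInter fun g _ => isClopen_setOf_mem g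

lemma isClosed_range_toBoolFun : IsClosed (Set.range (toBoolFun : Subgroup G → G → Bool)) := by
  have hrange : Set.range (toBoolFun : Subgroup G → G → Bool) =
      {f | f 1 = true} ∩ (⋂ (x : G) (y : G), {f | f x = true ∧ f y = true → f (x * y) = true}) ∩
        ⋂ x : G, {f | f x = true → f x⁻¹ = true} := by
    ext f
    simp only [Set.mem_range, Set.mem_inter_iff, Set.mem_iInter, Set.mem_ofPred_eq]
    constructor
    · rintro ⟨H, rfl⟩
      simp only [toBoolFun_eq_true]
      exact ⟨⟨H.one_mem, fun x y h => H.mul_mem h.1 h.2⟩, fun x => H.inv_mem⟩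
    · rintro ⟨⟨h1, hmul⟩, hinv⟩
      refine ⟨⟨⟨⟨{g | f g = true}, fun ha hb => hmul _ _ ⟨ha, hb⟩⟩, h1⟩, hinv _⟩, ?_⟩
      funext g
      cases hg : f g <;> simp [toBoolFun, hg]
  have hcoord (x : G) : IsClopen {f : G → Bool | f x = true} :=
    (isClopen_discrete {true}).preimage (continuous_apply x)
  rw [hrange]
  refine ((hcoord 1).isClosed.inter (isClosed_iInter fun x => isClosed_iInter fun y => ?_)).inter
    (isClosed_iInter fun x => isClosed_imp (hcoord x).isOpen (hcoord x⁻¹).isClosed)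
  exact isClosed_imp ((hcoord x).isOpen.inter (hcoord y).isOpen) (hcoord (x * y)).isClosed

instance : CompactSpace (Subgroup G) :=
  ⟨by simpa [isEmbedding_toBoolFun.isCompact_iff] using isClosed_range_toBoolFun.isCompact⟩

instance [Countable G] : MetrizableSpace (Subgroup G) :=
  isEmbedding_toBoolFun.metrizableSpace

end SubgroupSpace

section SubgroupMeasure

variable {G : Type*} [Group G]

lemma measurableSet_NSet [Countable G] (A : Set G) : MeasurableSet (NSet A) := by
  rw [NSet_eq_biInter]
  exact .biInter A.to_countable fun g _ => (isClopen_setOf_mem g).isOpen.measurableSet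

variable (G) in
def NSets : Set (Set (Subgroup G)) :=
  Set.range fun F : Finset G => NSet (F : Set G)

lemma isPiSystem_NSets : IsPiSystem (NSets G) := by
  classical
  rintro - ⟨F, rfl⟩ - ⟨F', rfl⟩ -
  exact ⟨F ∪ F', by ext H; simp [NSet, Set.union_subset_iff]⟩

lemma borel_eq_generateFrom_NSets [Countable G] :
    instMeasSub G = .generateFrom (NSets G) := by
  set m := MeasurableSpace.generateFrom (NSets G)
  refine le_antisymm ?_ (MeasurableSpace.generateFrom_le ?_)
  · have hmeas : Measurable[m] (toBoolFun : Subgroup G → G → Bool) := by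
      refine measurable_pi_iff.mpr fun g => @measurable_to_bool _ m _ ?_
      refine MeasurableSpace.measurableSet_generateFrom ⟨{g}, ?_⟩
      ext H; simp [NSet, toBoolFun_eq_true]
    calc instMeasSub G = (borel (G → Bool)).comap toBoolFun := borel_comap
      _ = MeasurableSpace.pi.comap toBoolFun := by rw [← BorelSpace.measurable_eq]
      _ ≤ m := measurable_iff_comap_le.mp hmeas
  · rintro - ⟨F, rfl⟩
    exact measurableSet_NSet _

lemma measure_ext_NSet [Countable G] {μ ν : Measure (Subgroup G)} [IsProbabilityMeasure μ]
    [IsProbabilityMeasure ν] (h : ∀ F : Finset G, μ (NSet (F : Set G)) = ν (NSet (F : Set G))) :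
    μ = ν := by
  refine ext_of_generate_finite _ borel_eq_generateFrom_NSets isPiSystem_NSets ?_ (by simp)
  rintro - ⟨F, rfl⟩
  exact h F

end SubgroupMeasure

section WeakConvergence

variable {G : Type*} [Group G] [Countable G]

lemma tendsto_of_forall_tendsto_NSet {ι : Type*} {l : Filter ι}
    {μs : ι → ProbabilityMeasure (Subgroup G)} {μ : ProbabilityMeasure (Subgroup G)}
    (h : ∀ F : Finset G, Tendsto (fun i => (μs i : Measure (Subgroup G)) (NSet (F : Set G))) l
      (𝓝 ((μ : Measure (Subgroup G)) (NSet (F : Set G))))) :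
    Tendsto μs l (𝓝 μ) := by
  refine tendsto_nhds_of_unique_mapClusterPt fun ν hν => ?_
  refine ProbabilityMeasure.toMeasure_injective (measure_ext_NSet fun F => ?_)
  have hF := hν.tendsto_comp
    ((ProbabilityMeasure.continuous_apply_of_isClopen (isClopen_NSet F.finite_toSet)).tendsto ν)
  exact eq_of_nhds_neBot (ClusterPt.mono hF (h F))

end WeakConvergence

section Conjugation

variable {G : Type*} [Group G]

lemma mem_conjSub {g x : G} {H : Subgroup G} : x ∈ conjSub g H ↔ g⁻¹ * x * g ∈ H := by
  rw [conjSub, Subgroup.mem_map_equiv, MulAut.conj_symm_apply]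

lemma continuous_conjSub (g : G) : Continuous (conjSub g : Subgroup G → Subgroup G) := by
  refine isEmbedding_toBoolFun.continuous_iff.mpr (continuous_pi fun x => ?_)
  have hx : (fun H => toBoolFun (conjSub g H) x) = fun H => toBoolFun H (g⁻¹ * x * g) :=
    funext fun H => decide_eq_decide.mpr mem_conjSub
  simpa only [Function.comp_apply, hx] using continuous_toBoolFun_apply (g⁻¹ * x * g)

lemma conjSub_top (g : G) : conjSub g ⊤ = ⊤ :=
  Subgroup.map_top_of_surjective _ (MulAut.conj g).surjective

lemma conjSub_bot (g : G) : conjSub g ⊥ = ⊥ :=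
  Subgroup.map_bot _

noncomputable def topBotMix (p : unitInterval) : IRSSpace G :=
  ⟨diracMix ⊤ ⊥ p, fun g => by
    rw [map_diracMix (continuous_conjSub g).measurable, conjSub_top, conjSub_bot]⟩

lemma continuous_topBotMix : Continuous (topBotMix : unitInterval → IRSSpace G) :=
  (continuous_diracMix ⊤ ⊥).subtype_mk _

lemma topBotMix_apply_setOf_mem {x : G} (hx : x ≠ 1) (p : unitInterval) :
    ((topBotMix (G := G) p).1 : Measure (Subgroup G)) {H | x ∈ H} = ENNReal.ofReal p :=
  diracMix_apply_of_mem_of_notMem (isClopen_setOf_mem x).isOpen.measurableSet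
    (Subgroup.mem_top x) (by simpa using hx) p

end Conjugation

section Coinduction

variable {Δ : Type*} [Group Δ] {Γ : Subgroup Δ} {T : Set Δ}

lemma IsLeftTransversal.bijective (hT : IsLeftTransversal Γ T) :
    Function.Bijective fun t : T => (t : Δ ⧸ Γ) := by
  refine ⟨fun t₁ t₂ h => Subtype.ext ((hT t₁).unique ⟨t₁.2, by simp⟩ ⟨t₂.2, ?_⟩), fun q => ?_⟩
  · exact QuotientGroup.eq.mp h
  · induction q using QuotientGroup.induction_on with
    | H d =>
      obtain ⟨t, ⟨htT, hdt⟩, -⟩ := hT d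
      exact ⟨⟨t, htT⟩, QuotientGroup.eq.mpr (by simpa using Γ.inv_mem hdt)⟩

lemma IsLeftTransversal.finite_iff (hT : IsLeftTransversal Γ T) : Finite T ↔ Finite (Δ ⧸ Γ) :=
  (Equiv.ofBijective _ hT.bijective).finite_iff

lemma NpullSet_eq_NSet (S : Set Δ) : NpullSet Γ S = NSet (((↑) : Γ → Δ) ⁻¹' S) := by
  ext Λ; simp [NpullSet, NSet, Set.subset_def]

lemma isClopen_NpullSet [Countable Δ] {S : Set Δ} (hS : S.Finite) : IsClopen (NpullSet Γ S) := by
  rw [NpullSet_eq_NSet]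
  exact isClopen_NSet (hS.preimage Subtype.val_injective.injOn)

lemma NpullSet_conj_singleton {γ : Δ} (hγ : γ ∈ Γ.normalCore) (t : Δ) :
    NpullSet Γ ((fun d => t⁻¹ * d * t) '' {γ}) =
      {Λ | ⟨t⁻¹ * γ * t, by simpa using hγ t⁻¹⟩ ∈ Λ} := by
  ext Λ
  simp only [NpullSet, Set.image_singleton, Set.mem_singleton_iff, Set.mem_ofPred_eq,
    Subtype.forall]
  exact ⟨fun hΛ => hΛ _ _ rfl, fun hΛ a _ ha => by subst ha; exact hΛ⟩

lemma NpullSet_eq_univ_of_subset_one {S : Set Δ} (hS : S ⊆ {1}) : NpullSet Γ S = Set.univ :=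
  Set.eq_univ_of_forall fun Λ x hx => by
    rw [show x = 1 from Subtype.ext (hS hx)]
    exact Λ.one_mem

lemma CindSpec.eq_dirac_bot [Countable Δ] {θ : Measure (Subgroup Γ)} {ν : Measure (Subgroup Δ)}
    [IsProbabilityMeasure θ] [IsProbabilityMeasure ν] (h : CindSpec Γ T θ ν)
    (hcore : Γ.normalCore = ⊥) : ν = Measure.dirac ⊥ := by
  refine measure_ext_NSet fun F => ?_
  rw [Measure.dirac_apply' _ (measurableSet_NSet _)]
  by_cases hF : (F : Set Δ) ⊆ Γ.normalCore
  · rw [hcore] at hF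
    have hconj (t : Δ) : (fun d => t⁻¹ * d * t) '' (F : Set Δ) ⊆ {1} := by
      rintro - ⟨d, hd, rfl⟩
      simp [Subgroup.mem_bot.mp (hF hd)]
    rw [(h F).2 (hcore ▸ hF), Set.indicator_of_mem hF]
    simp [NpullSet_eq_univ_of_subset_one (hconj _)]
  · rw [(h F).1 hF, Set.indicator_of_notMem (hcore ▸ hF)]

lemma continuous_of_cindSpec [Countable Δ] [Finite T] {X : Type*} [TopologicalSpace X]
    {θ : X → ProbabilityMeasure (Subgroup Γ)} {ν : X → ProbabilityMeasure (Subgroup Δ)}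
    (hθ : Continuous θ) (h : ∀ x, CindSpec Γ T (θ x) (ν x)) : Continuous ν := by
  have := Fintype.ofFinite T
  refine continuous_iff_continuousAt.mpr fun x => tendsto_of_forall_tendsto_NSet fun F => ?_
  by_cases hF : (F : Set Δ) ⊆ Γ.normalCore
  · simp only [(h _ F).2 hF, tprod_fintype]
    refine ENNReal.tendsto_finsetProd_of_ne_top _ (fun t _ => ?_) fun _ _ => measure_ne_top _ _
    exact ((ProbabilityMeasure.continuous_apply_of_isClopen
      (isClopen_NpullSet (F.finite_toSet.image _))).comp hθ).tendsto x
  · simp only [(h _ F).1 hF]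
    exact tendsto_const_nhds

lemma CindSpec.topBotMix_apply_NSet_singleton [Countable Δ] {ν : Measure (Subgroup Δ)} {γ : Δ}
    {p : unitInterval} (h : CindSpec Γ T ((topBotMix (G := Γ) p).1 : Measure (Subgroup Γ)) ν)
    (hγ : γ ∈ Γ.normalCore) (hγ1 : γ ≠ 1) :
    ν (NSet {γ}) = ∏' _ : T, ENNReal.ofReal p := by
  have key := (h {γ}).2 (by simpa using hγ)
  simp only [Finset.coe_singleton, NpullSet_conj_singleton hγ] at key
  refine key.trans (tprod_congr fun t => ?_)
  refine topBotMix_apply_setOf_mem ?_ p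
  simpa [mul_assoc, inv_mul_eq_one, mul_eq_left] using hγ1

lemma not_continuous_of_cindSpec [Countable Δ] [Infinite T] {γ : Δ} (hγ : γ ∈ Γ.normalCore)
    (hγ1 : γ ≠ 1) {c : IRSSpace Γ → IRSSpace Δ}
    (hc : ∀ θ : IRSSpace Γ,
      CindSpec Γ T (θ.1 : Measure (Subgroup Γ)) ((c θ).1 : Measure (Subgroup Δ))) :
    ¬Continuous c := by
  intro hcont
  set f : unitInterval → ℝ≥0∞ := fun p => ((c (topBotMix p)).1 : Measure (Subgroup Δ)) (NSet {γ})
  have hf : Continuous f :=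
    (ProbabilityMeasure.continuous_apply_of_isClopen (isClopen_NSet (Set.finite_singleton γ))).comp
      (continuous_subtype_val.comp (hcont.comp continuous_topBotMix))
  have hval (p : unitInterval) : f p = ∏' _ : T, ENNReal.ofReal p :=
    (hc _).topBotMix_apply_NSet_singleton hγ hγ1
  have hlt : Set.Iio (1 : unitInterval) ⊆ f ⁻¹' {0} := fun p hp => by
    rw [Set.mem_preimage, hval, ENNReal.tprod_const_of_lt_one (ENNReal.ofReal_lt_one.mpr hp)]
    rfl
  have h1 : f 1 = 1 := by simp [hval]
  have h1_mem : (1 : unitInterval) ∈ closure (Set.Iio 1) := by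
    rw [closure_Iio' (a := (1 : unitInterval)) ⟨0, zero_lt_one⟩]
    exact Set.mem_Iic.mpr le_rfl
  simpa [h1] using closure_minimal hlt (isClosed_singleton.preimage hf) h1_mem

end Coinduction

/-- **Proposition 1.8 / 6.1.** The co-induction map `CIND_Γ^Δ : IRS(Γ) → IRS(Δ)` is
continuous (for the weak* topologies) iff `[Δ : Γ] < ∞` or `core_Δ(Γ)` is trivial. -/
theorem coinduction_IRS_continuous_iff {Δ : Type*} [Group Δ] [Countable Δ] (Γ : Subgroup Δ)
    (T : Set Δ) (hT : IsLeftTransversal Γ T)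
    (c : IRSSpace ↥Γ → IRSSpace Δ)
    (hc : ∀ θ : IRSSpace ↥Γ,
      CindSpec Γ T (θ.1 : Measure (Subgroup ↥Γ)) ((c θ).1 : Measure (Subgroup Δ))) :
    Continuous c ↔ (Finite (Δ ⧸ Γ) ∨ Γ.normalCore = ⊥) := by
  refine ⟨fun hcont => ?_, ?_⟩
  · refine Γ.normalCore.bot_or_exists_ne_one.symm.imp (fun ⟨γ, hγ, hγ1⟩ => ?_) id
    rw [← hT.finite_iff]
    by_contra hinf
    have : Infinite T := not_finite_iff_infinite.mp hinf
    exact not_continuous_of_cindSpec hγ hγ1 hc hcont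
  · rintro (hfin | hcore)
    · have : Finite T := hT.finite_iff.mpr hfin
      exact (continuous_of_cindSpec continuous_subtype_val hc).subtype_mk _
    · refine continuous_of_const fun θ θ' => Subtype.ext (ProbabilityMeasure.toMeasure_injective ?_)
      rw [(hc θ).eq_dirac_bot hcore, (hc θ').eq_dirac_bot hcore]

end IRSPaper
end

section
/- Let Δ be a countable discrete group containing ℤ as a subgroup with [Δ : ℤ] = ∞. Then every invariant random subgroup θ of ℤ satisfies CIND_ℤ^Δ(θ) = δ_{core_Δ(ker(θ))}, the Dirac measure at the subgroup core_Δ(ker(θ)). -/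
open MeasureTheory

open scoped ENNReal

lemma IsOfFinOrder.of_zpow {G : Type*} [Group G] {x : G} {n : ℤ} (h : IsOfFinOrder (x ^ n))
    (hn : n ≠ 0) : IsOfFinOrder x := by
  rcases Int.natAbs_eq n with hn' | hn' <;> rw [hn'] at h
  · exact (zpow_natCast x _ ▸ h).of_pow (Int.natAbs_ne_zero.2 hn)
  · rw [zpow_neg, isOfFinOrder_inv_iff, zpow_natCast] at h
    exact h.of_pow (Int.natAbs_ne_zero.2 hn)

lemma MulEquiv.apply_eq_self_or_inv_of_isCyclic {C : Type*} [Group C] [IsCyclic C] (φ : C ≃* C)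
    {x : C} (hx : ¬IsOfFinOrder x) : φ x = x ∨ φ x = x⁻¹ := by
  obtain ⟨m, hm⟩ := φ.toMonoidHom.map_cyclic
  obtain ⟨n, hn⟩ := φ.symm.toMonoidHom.map_cyclic
  have hmn : m * n = 1 := injective_zpow_iff_not_isOfFinOrder.2 hx <| by
    calc x ^ (m * n) = φ.symm (φ x) := by rw [zpow_mul, ← hm, ← hn]; rfl
    _ = x ^ (1 : ℤ) := by simp
  rcases Int.eq_one_or_neg_one_of_mul_eq_one hmn with rfl | rfl
  · exact .inl (by simpa using hm x)
  · exact .inr (by simpa using hm x)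

lemma conj_eq_self_or_inv_of_mem_normalCore_zpowers {Δ : Type*} [Group Δ] {z : Δ}
    (hz : ¬IsOfFinOrder z) {γ : Δ} (hγ : γ ∈ (Subgroup.zpowers z).normalCore) (δ : Δ) :
    δ * γ * δ⁻¹ = γ ∨ δ * γ * δ⁻¹ = γ⁻¹ := by
  obtain ⟨a, rfl⟩ := Subgroup.mem_zpowers_iff.1 (Subgroup.normalCore_le _ hγ)
  rcases eq_or_ne a 0 with rfl | ha
  · simp
  have : IsCyclic (Subgroup.zpowers z).normalCore :=
    Subgroup.isCyclic_of_le (Subgroup.normalCore_le _)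
  have hfin : ¬IsOfFinOrder (⟨z ^ a, hγ⟩ : (Subgroup.zpowers z).normalCore) :=
    fun h => hz ((Submonoid.isOfFinOrder_coe.2 h).of_zpow ha)
  simpa [Subtype.ext_iff, MulAut.conjNormal_apply] using
    (MulAut.conjNormal δ).apply_eq_self_or_inv_of_isCyclic hfin

lemma ENNReal.tprod_const_of_lt_one_s15 {ι : Type*} [Infinite ι] {c : ℝ≥0∞} (hc : c < 1) :
    ∏' _ : ι, c = 0 := by
  have hcard : Filter.Tendsto (Finset.card : Finset ι → ℕ) Filter.atTop Filter.atTop :=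
    Filter.tendsto_atTop_atTop.2 fun n =>
      ⟨(Finset.range n).map (Infinite.natEmbedding ι), fun s hs => by
        simpa using Finset.card_le_card hs⟩
  refine HasProd.tprod_eq ?_
  simpa [HasProd, Function.comp_def] using
    (ENNReal.tendsto_pow_atTop_nhds_zero_of_lt_one hc).comp hcard

namespace IRSPaper

section SpaceOfSubgroups

variable {G : Type*} [Group G]

lemma measurableSet_setOf_mem (x : G) : MeasurableSet {H : Subgroup G | x ∈ H} := by
  refine IsOpen.measurableSet (isOpen_induced_iff.2
    ⟨(fun f => f x) ⁻¹' {true}, (isOpen_discrete _).preimage (continuous_apply x), ?_⟩)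
  ext H
  simp

lemma eq_dirac_of_measure_setOf_mem [Countable G] (μ : Measure (Subgroup G))
    [IsProbabilityMeasure μ] (K : Subgroup G) (h_mem : ∀ x ∈ K, μ {H | x ∈ H} = 1)
    (h_notMem : ∀ x ∉ K, μ {H | x ∈ H} = 0) : μ = Measure.dirac K := by
  have h_iff : ∀ x, ∀ᵐ H ∂μ, x ∈ H ↔ x ∈ K := by
    intro x
    by_cases hx : x ∈ K
    · filter_upwards [(mem_ae_iff_prob_eq_one (measurableSet_setOf_mem x)).2 (h_mem x hx)]
        with H hH using iff_of_true hH hx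
    · filter_upwards [measure_eq_zero_iff_ae_notMem.1 (h_notMem x hx)]
        with H hH using iff_of_false hH hx
  have hae : ∀ᵐ H ∂μ, H = K := by
    filter_upwards [ae_all_iff.2 h_iff] with H hH using Subgroup.ext hH
  calc μ = μ.map id := Measure.map_id.symm
  _ = μ.map (fun _ => K) := Measure.map_congr hae
  _ = Measure.dirac K := by simp [Measure.map_const]

def aeMemSubgroup (θ : Measure (Subgroup G)) : Subgroup G where
  carrier := {x | ∀ᵐ Λ ∂θ, x ∈ Λ}
  one_mem' := ae_of_all _ fun Λ => Λ.one_mem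
  mul_mem' {x y} hx hy := show ∀ᵐ Λ ∂θ, x * y ∈ Λ by
    filter_upwards [hx, hy] with Λ using Λ.mul_mem
  inv_mem' {x} hx := show ∀ᵐ Λ ∂θ, x⁻¹ ∈ Λ by
    filter_upwards [hx] with Λ using Λ.inv_mem

end SpaceOfSubgroups

section Coinduction

variable {Δ : Type*} [Group Δ] {Γ : Subgroup Δ}

lemma mem_kerIRS_iff (θ : Measure (Subgroup Γ)) [IsProbabilityMeasure θ] {x : Γ} :
    x ∈ kerIRS Γ θ ↔ θ {Λ | x ∈ Λ} = 1 := by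
  have hker : {x : Γ | θ {Λ | x ∈ Λ} = 1} = aeMemSubgroup θ := by
    ext x
    exact (mem_ae_iff_prob_eq_one (measurableSet_setOf_mem x)).symm
  rw [kerIRS, hker, Subgroup.closure_eq]
  exact mem_ae_iff_prob_eq_one (measurableSet_setOf_mem x)

lemma mem_normalCore_iff_of_conj {H : Subgroup Δ} {γ : Δ}
    (hconj : ∀ δ : Δ, δ * γ * δ⁻¹ = γ ∨ δ * γ * δ⁻¹ = γ⁻¹) : γ ∈ H.normalCore ↔ γ ∈ H := by
  refine ⟨fun h => H.normalCore_le h, fun h δ => ?_⟩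
  rcases hconj δ with e | e <;> rw [e]
  exacts [h, inv_mem h]

lemma mem_coreKer_iff (θ : Measure (Subgroup Γ)) [IsProbabilityMeasure θ] {γ : Δ} (hγ : γ ∈ Γ)
    (hconj : ∀ δ : Δ, δ * γ * δ⁻¹ = γ ∨ δ * γ * δ⁻¹ = γ⁻¹) :
    γ ∈ coreKer Γ θ ↔ θ {Λ | ⟨γ, hγ⟩ ∈ Λ} = 1 := by
  rw [coreKer, mem_normalCore_iff_of_conj hconj, ← mem_kerIRS_iff]
  exact ⟨fun ⟨x, hx, hxγ⟩ => (Subtype.ext hxγ : x = ⟨γ, hγ⟩) ▸ hx, fun h => ⟨_, h, rfl⟩⟩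

lemma coreKer_le_normalCore (θ : Measure (Subgroup Γ)) : coreKer Γ θ ≤ Γ.normalCore :=
  Subgroup.normalCore_mono (Subgroup.map_subtype_le _)

lemma IsLeftTransversal.infinite (hinf : Infinite (Δ ⧸ Γ)) {T : Set Δ}
    (hT : IsLeftTransversal Γ T) : Infinite T := by
  refine Infinite.of_surjective (fun t : T => (t : Δ ⧸ Γ)) fun q => ?_
  induction q using QuotientGroup.induction_on with
  | H d =>
    obtain ⟨t, ⟨htT, htd⟩, -⟩ := hT d
    exact ⟨⟨t, htT⟩, (QuotientGroup.eq.2 htd).symm⟩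

lemma npullSet_singleton {w : Δ} (hw : w ∈ Γ) : NpullSet Γ {w} = {Λ | ⟨w, hw⟩ ∈ Λ} := by
  ext Λ
  exact ⟨fun h => h _ rfl, fun h x hx => (Subtype.ext hx : x = ⟨w, hw⟩) ▸ h⟩

lemma nSet_singleton (γ : Δ) : NSet (({γ} : Finset Δ) : Set Δ) = {H : Subgroup Δ | γ ∈ H} := by
  ext H
  simp [NSet]

variable {T : Set Δ} {θ : Measure (Subgroup Γ)} {ν : Measure (Subgroup Δ)}

lemma CindSpec.measure_setOf_mem_of_notMem (hc : CindSpec Γ T θ ν) {γ : Δ}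
    (hγ : γ ∉ Γ.normalCore) : ν {H | γ ∈ H} = 0 := by
  rw [← nSet_singleton]
  exact (hc {γ}).1 (by simpa using hγ)

lemma CindSpec.measure_setOf_mem_of_conj (hc : CindSpec Γ T θ ν) {γ : Δ}
    (hγ : γ ∈ Γ.normalCore) (hconj : ∀ δ : Δ, δ * γ * δ⁻¹ = γ ∨ δ * γ * δ⁻¹ = γ⁻¹) :
    ν {H | γ ∈ H} = ∏' _ : T, θ {Λ | ⟨γ, Γ.normalCore_le hγ⟩ ∈ Λ} := by
  rw [← nSet_singleton, (hc {γ}).2 (by simpa using hγ)]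
  refine tprod_congr fun t => ?_
  rw [Finset.coe_singleton, Set.image_singleton]
  rcases inv_inv (t : Δ) ▸ hconj (t : Δ)⁻¹ with h | h <;> rw [h]
  · rw [npullSet_singleton]
  · rw [npullSet_singleton (inv_mem (Γ.normalCore_le hγ))]
    exact congrArg θ <| Set.ext fun Λ =>
      inv_mem_iff (x := (⟨γ, Γ.normalCore_le hγ⟩ : Γ)) (H := Λ)

theorem CindSpec.eq_dirac_coreKer [Countable Δ] (hinf : Infinite (Δ ⧸ Γ))
    (hconj : ∀ γ ∈ Γ.normalCore, ∀ δ : Δ, δ * γ * δ⁻¹ = γ ∨ δ * γ * δ⁻¹ = γ⁻¹)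
    [IsProbabilityMeasure θ] [IsProbabilityMeasure ν] (hT : IsLeftTransversal Γ T)
    (hc : CindSpec Γ T θ ν) : ν = Measure.dirac (coreKer Γ θ) := by
  have : Infinite T := hT.infinite hinf
  refine eq_dirac_of_measure_setOf_mem ν _ (fun γ hγK => ?_) (fun γ hγK => ?_)
  · have hγ := coreKer_le_normalCore θ hγK
    rw [hc.measure_setOf_mem_of_conj hγ (hconj γ hγ),
      (mem_coreKer_iff θ _ (hconj γ hγ)).1 hγK, tprod_one]
  · by_cases hγ : γ ∈ Γ.normalCore
    · rw [hc.measure_setOf_mem_of_conj hγ (hconj γ hγ)]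
      exact ENNReal.tprod_const_of_lt_one_s15 <|
        prob_le_one.lt_of_ne (mt (mem_coreKer_iff θ _ (hconj γ hγ)).2 hγK)
    · exact hc.measure_setOf_mem_of_notMem hγ

end Coinduction

/-- **Proposition 7.5.** If `ℤ ≤ Δ` (an infinite cyclic subgroup, generated by an element `z`
of infinite order) has infinite index in `Δ`, then for every IRS `θ` of `ℤ` the co-induced
IRS `CIND_ℤ^Δ(θ)` is the Dirac measure at `core_Δ(ker(θ))`. -/
theorem coinduction_from_Z_dirac {Δ : Type*} [Group Δ] [Countable Δ]
    (z : Δ) (hz : ¬ IsOfFinOrder z)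
    (hinf : Infinite (Δ ⧸ Subgroup.zpowers z))
    (θ : Measure (Subgroup ↥(Subgroup.zpowers z))) (hθ : IsIRS θ)
    (T : Set Δ) (hT : IsLeftTransversal (Subgroup.zpowers z) T)
    (ν : Measure (Subgroup Δ)) (hν : IsIRS ν)
    (hc : CindSpec (Subgroup.zpowers z) T θ ν) :
    ν = Measure.dirac (coreKer (Subgroup.zpowers z) θ) :=
  have := hθ.1
  have := hν.1
  hc.eq_dirac_coreKer hinf (fun _ hγ => conj_eq_self_or_inv_of_mem_normalCore_zpowers hz hγ) hT

end IRSPaper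
end
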